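/- Finite mixtures of Gaussian densities are identifiable: let n, m ≥ 1, let w : Fin n → ℝ and w' : Fin m → ℝ be weights with wᵢ > 0, Σᵢ wᵢ = 1, w'ⱼ > 0, Σⱼ w'ⱼ = 1, and let (μᵢ, σᵢ)_{i ∈ Fin n} and (μ'ⱼ, σ'ⱼ)_{j ∈ Fin m} be parameter pairs with every σᵢ, σ'ⱼ > 0 and the pairs within each family pairwise distinct. If Σ_{i ∈ Fin n} wᵢ φ(y; μᵢ, σᵢ) = Σ_{j ∈ Fin m} w'ⱼ φ(y; μ'ⱼ, σ'ⱼ) for every y ∈ ℝ, then n = m and there exists a bijection e : Fin n ≃ Fin m with w'_{e(i)} = wᵢ, μ'_{e(i)} = μᵢ and σ'_{e(i)} = σᵢ for all i. -/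

import Mathlib

/-!
Gaussian densities with distinct parameters are linearly independent functions: ordering the
parameters lexicographically by `(σ, μ)`, each density is `o` of every larger one as `y → ∞`,
because the difference of the exponents is a quadratic in `y` tending to `+∞`. Two mixtures that
agree therefore have the same coefficient on every density, which matches the components.
-/

/-- The Gaussian density with mean `μ` and standard deviation `σ > 0`. -/
noncomputable def gaussDensity (μ σ y : ℝ) : ℝ :=
  (σ * Real.sqrt (2 * Real.pi))⁻¹ * Real.exp (-(y - μ) ^ 2 / (2 * σ ^ 2))

open Filter Asymptotics Function

theorem Finsupp.mapDomain_apply_ne_zero_iff {α ι R : Type*} [AddCommMonoid R] {P : α → ι}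
    (hP : Injective P) {f : α →₀ R} (hf : ∀ i, f i ≠ 0) {x : ι} :
    mapDomain P f x ≠ 0 ↔ x ∈ Set.range P := by
  constructor
  · exact fun hx => by_contra fun hxP => hx (mapDomain_of_notMem_range f x hxP)
  · rintro ⟨i, rfl⟩
    rw [mapDomain_apply hP]
    exact hf i

theorem LinearIndependent.exists_equiv_of_sum_smul_eq {R M ι α β : Type*} [Semiring R]
    [AddCommMonoid M] [Module R M] [Fintype α] [Fintype β] {v : ι → M}
    (hv : LinearIndependent R v) {P : α → ι} {Q : β → ι} (hP : Injective P) (hQ : Injective Q)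
    {a : α → R} {b : β → R} (ha : ∀ i, a i ≠ 0) (hb : ∀ j, b j ≠ 0)
    (h : ∑ i, a i • v (P i) = ∑ j, b j • v (Q j)) :
    ∃ e : α ≃ β, ∀ i, Q (e i) = P i ∧ b (e i) = a i := by
  set A := Finsupp.mapDomain P (Finsupp.equivFunOnFinite.symm a)
  set B := Finsupp.mapDomain Q (Finsupp.equivFunOnFinite.symm b)
  have hAB : A = B := hv <| by
    rw [Finsupp.linearCombination_mapDomain, Finsupp.linearCombination_mapDomain,
      Finsupp.linearCombination_apply, Finsupp.linearCombination_apply,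
      Finsupp.sum_fintype _ _ (by simp), Finsupp.sum_fintype _ _ (by simp)]
    simpa using h
  have hrange : Set.range P = Set.range Q := by
    ext x
    rw [← Finsupp.mapDomain_apply_ne_zero_iff hP (f := Finsupp.equivFunOnFinite.symm a) ha,
      ← Finsupp.mapDomain_apply_ne_zero_iff hQ (f := Finsupp.equivFunOnFinite.symm b) hb]
    show A x ≠ 0 ↔ B x ≠ 0
    rw [hAB]
  let e : α ≃ β := (Equiv.ofInjective P hP).trans ((Equiv.setCongr hrange).trans
    (Equiv.ofInjective Q hQ).symm)
  have hQe : ∀ i, Q (e i) = P i := fun i => Equiv.apply_ofInjective_symm hQ _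
  refine ⟨e, fun i => ⟨hQe i, ?_⟩⟩
  calc b (e i) = B (Q (e i)) := by simp [B, Finsupp.mapDomain_apply hQ]
    _ = A (P i) := by rw [hQe, hAB]
    _ = a i := by simp [A, Finsupp.mapDomain_apply hP]

theorem linearIndependent_of_isLittleO {𝕜 α ι : Type*} [NormedField 𝕜] [LinearOrder ι]
    {l : Filter α} {f : ι → α → 𝕜} (hlo : ∀ i j, i < j → f i =o[l] f j)
    (hne : ∀ i, ∃ᶠ x in l, f i x ≠ 0) : LinearIndependent 𝕜 f := by
  classical
  rw [linearIndependent_iff']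
  intro s
  induction s using Finset.induction_on_max with
  | empty => simp
  | insert a s hlt ih =>
    intro g hsum
    have has : a ∉ s := fun ha => lt_irrefl a (hlt a ha)
    rw [Finset.sum_insert has] at hsum
    have hrest : (∑ i ∈ s, g i • f i) =o[l] f a :=
      IsLittleO.sum fun i hi => ((hlo i a (hlt i hi)).const_mul_left (g i)).congr_left
        fun x => by simp
    have hga : g a = 0 := by
      by_contra hga
      refine isLittleO_irrefl (hne a) ?_
      have : (g a • f a) =o[l] f a := by
        rw [eq_neg_of_add_eq_zero_left hsum]
        exact hrest.neg_left
      simpa [← smul_assoc, hga] using this.const_smul_left (g a)⁻¹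
    rw [hga, zero_smul, zero_add] at hsum
    intro i hi
    rcases Finset.mem_insert.mp hi with rfl | hi
    · exact hga
    · exact ih g hsum i hi

theorem tendsto_quadratic_atTop {a b : ℝ} (c : ℝ) (h : 0 < a ∨ a = 0 ∧ 0 < b) :
    Tendsto (fun y => a * y ^ 2 + b * y + c) atTop atTop := by
  refine tendsto_atTop_add_const_right _ c ?_
  rcases h with ha | ⟨rfl, hb⟩
  · exact (tendsto_id.atTop_mul_atTop₀ (tendsto_atTop_add_const_right _ b
      (tendsto_id.const_mul_atTop ha))).congr fun y => by simp; ring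
  · simpa using tendsto_id.const_mul_atTop hb

theorem gaussDensity_pos (μ : ℝ) {σ : ℝ} (hσ : 0 < σ) (y : ℝ) : 0 < gaussDensity μ σ y := by
  unfold gaussDensity
  positivity

theorem isLittleO_gaussDensity {μ₁ σ₁ μ₂ σ₂ : ℝ} (hσ₁ : 0 < σ₁)
    (h : toLex (σ₁, μ₁) < toLex (σ₂, μ₂)) :
    gaussDensity μ₁ σ₁ =o[atTop] gaussDensity μ₂ σ₂ := by
  rw [Prod.Lex.toLex_lt_toLex] at h
  have hσ₂ : 0 < σ₂ := hσ₁.trans_le (h.elim le_of_lt fun h => h.1.le)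
  -- the coefficients of `y ^ 2` and `y` in the difference of the two exponents
  have hcoeff : 0 < 1 / (2 * σ₁ ^ 2) - 1 / (2 * σ₂ ^ 2) ∨
      1 / (2 * σ₁ ^ 2) - 1 / (2 * σ₂ ^ 2) = 0 ∧ 0 < μ₂ / σ₂ ^ 2 - μ₁ / σ₁ ^ 2 := by
    rcases h with hlt | ⟨rfl, hlt⟩
    · left
      have : 1 / (2 * σ₂ ^ 2) < 1 / (2 * σ₁ ^ 2) := by gcongr
      linarith
    · right
      refine ⟨sub_self _, sub_pos.2 ?_⟩
      gcongr
  have hexp : (fun y => Real.exp (-(y - μ₁) ^ 2 / (2 * σ₁ ^ 2))) =o[atTop]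
      fun y => Real.exp (-(y - μ₂) ^ 2 / (2 * σ₂ ^ 2)) := by
    rw [Real.isLittleO_exp_comp_exp_comp]
    refine (tendsto_quadratic_atTop (μ₁ ^ 2 / (2 * σ₁ ^ 2) - μ₂ ^ 2 / (2 * σ₂ ^ 2)) hcoeff).congr
      fun y => ?_
    field_simp
    ring
  exact (hexp.const_mul_left _).const_mul_right (by positivity)

theorem linearIndependent_gaussDensity :
    LinearIndependent ℝ (fun p : {p : ℝ × ℝ // 0 < p.2} => gaussDensity p.1.1 p.1.2) := by
  let _ : LinearOrder {p : ℝ × ℝ // 0 < p.2} :=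
    LinearOrder.lift' (fun p => toLex (p.1.2, p.1.1)) fun p q h => by
      obtain ⟨h₂, h₁⟩ := Prod.mk.inj (toLex.injective h)
      exact Subtype.ext (Prod.ext h₁ h₂)
  exact linearIndependent_of_isLittleO (l := atTop) (fun p q hpq => isLittleO_gaussDensity p.2 hpq)
    fun p => Frequently.of_forall fun y => (gaussDensity_pos _ p.2 y).ne'

theorem gaussian_mixture_identifiable_general
    {n m : ℕ}
    (w : Fin n → ℝ) (w' : Fin m → ℝ)
    (μ σ : Fin n → ℝ) (μ' σ' : Fin m → ℝ)
    (hw : ∀ i, 0 < w i)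
    (hw' : ∀ j, 0 < w' j)
    (hσ : ∀ i, 0 < σ i) (hσ' : ∀ j, 0 < σ' j)
    (hdist : Function.Injective (fun i => (μ i, σ i)))
    (hdist' : Function.Injective (fun j => (μ' j, σ' j)))
    (heq : ∀ y : ℝ,
      ∑ i, w i * gaussDensity (μ i) (σ i) y = ∑ j, w' j * gaussDensity (μ' j) (σ' j) y) :
    n = m ∧ ∃ e : Fin n ≃ Fin m, ∀ i,
      w' (e i) = w i ∧ μ' (e i) = μ i ∧ σ' (e i) = σ i := by
  let P : Fin n → {p : ℝ × ℝ // 0 < p.2} := fun i => ⟨(μ i, σ i), hσ i⟩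
  let Q : Fin m → {p : ℝ × ℝ // 0 < p.2} := fun j => ⟨(μ' j, σ' j), hσ' j⟩
  have hsum : ∑ i, w i • gaussDensity (P i).1.1 (P i).1.2 =
      ∑ j, w' j • gaussDensity (Q j).1.1 (Q j).1.2 := by
    ext y
    simpa [Finset.sum_apply] using heq y
  obtain ⟨e, he⟩ := linearIndependent_gaussDensity.exists_equiv_of_sum_smul_eq
    (fun i j h => hdist (congrArg Subtype.val h)) (fun i j h => hdist' (congrArg Subtype.val h))
    (fun i => (hw i).ne') (fun j => (hw' j).ne') hsum
  refine ⟨Fin.equiv_iff_eq.mp ⟨e⟩, e, fun i => ?_⟩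
  obtain ⟨hQP, hwe⟩ := he i
  obtain ⟨hμ, hσe⟩ := Prod.mk.inj (congrArg Subtype.val hQP)
  exact ⟨hwe, hμ, hσe⟩

/-- Finite mixtures of Gaussian densities are identifiable: two finite mixtures with
positive weights summing to one and pairwise distinct (mean, sd) parameter pairs that agree
as functions on ℝ must have the same number of components and matching parameters up to a
bijection of the component labels. -/
theorem gaussian_mixture_identifiable
    {n m : ℕ} (hn : 1 ≤ n) (hm : 1 ≤ m)
    (w : Fin n → ℝ) (w' : Fin m → ℝ)
    (μ σ : Fin n → ℝ) (μ' σ' : Fin m → ℝ)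
    (hw : ∀ i, 0 < w i) (hwsum : ∑ i, w i = 1)
    (hw' : ∀ j, 0 < w' j) (hw'sum : ∑ j, w' j = 1)
    (hσ : ∀ i, 0 < σ i) (hσ' : ∀ j, 0 < σ' j)
    (hdist : Function.Injective (fun i => (μ i, σ i)))
    (hdist' : Function.Injective (fun j => (μ' j, σ' j)))
    (heq : ∀ y : ℝ,
      ∑ i, w i * gaussDensity (μ i) (σ i) y = ∑ j, w' j * gaussDensity (μ' j) (σ' j) y) :
    n = m ∧ ∃ e : Fin n ≃ Fin m, ∀ i,
      w' (e i) = w i ∧ μ' (e i) = μ i ∧ σ' (e i) = σ i :=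
  gaussian_mixture_identifiable_general w w' μ σ μ' σ' hw hw' hσ hσ' hdist hdist' heq
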